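/- Let G be a compact topological group equipped with its Borel σ-algebra and let μ be the normalized Haar probability measure on G. Fix k ≥ 1 and a set E of pairs (i,j) with i < j in Fin k (the edge set of a graph on k vertices, a subgraph of the complete graph), and for each edge (i,j) ∈ E let ρ_{ij} be a continuous unitary matrix representation of G with character χ_{ρ_{ij}}. Then the complex number ∫_{G^k} ∏_{(i,j)∈E} χ_{ρ_{ij}}(gᵢ · gⱼ⁻¹) dμ^{⊗k}(g) is a nonnegative real number: its imaginary part is 0 and its real part is ≥ 0. -/

import Mathlib

open MeasureTheory
open scoped ComplexOrder

/-!
Write `φₓ(g) = ∏_e ρ_e(g_{s e} g_{t e}⁻¹)_{x e}` for a choice `x` of one matrix entry per edge.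
Since `tr (Aᴴ B) = ∑_{a,b} conj A_{ab} B_{ab}` and characters are class functions, the integrand
`f` satisfies `f(h⁻¹g) = ∑ₓ conj (φₓ h) φₓ g`. Averaging over `h` with the left-invariant
probability measure gives `∫ f = ∑ₓ |∫ φₓ|² ≥ 0`. Entries of unitary matrices are bounded by `1`,
so every `φₓ` is integrable.
-/

section PositiveType

variable {H ι : Type*} [Group H] [MeasurableSpace H] [MeasurableMul H] [Fintype ι]
  {ν : Measure H} [IsProbabilityMeasure ν] [ν.IsMulLeftInvariant]

theorem integral_eq_sum_star_integral_mul_integral {f : H → ℂ} {φ : ι → H → ℂ}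
    (hφ : ∀ x, Integrable (φ x) ν) (hf : ∀ h g, f (h⁻¹ * g) = ∑ x, star (φ x h) * φ x g) :
    ∫ g, f g ∂ν = ∑ x, star (∫ g, φ x g ∂ν) * ∫ g, φ x g ∂ν := by
  have hφ_star (x : ι) : Integrable (fun h => star (φ x h)) ν :=
    Complex.conjLIE.integrable_comp_iff.2 (hφ x)
  calc ∫ g, f g ∂ν = ∫ h, ∫ g, f (h⁻¹ * g) ∂ν ∂ν := by
        simp only [integral_mul_left_eq_self, integral_const, probReal_univ, one_smul]
    _ = ∫ h, ∑ x, star (φ x h) * ∫ g, φ x g ∂ν ∂ν := by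
        simp_rw [hf, integral_finsetSum _ fun x _ => (hφ x).const_mul _, integral_const_mul]
    _ = ∑ x, star (∫ g, φ x g ∂ν) * ∫ g, φ x g ∂ν := by
        rw [integral_finsetSum _ fun x _ => (hφ_star x).mul_const _]
        exact Finset.sum_congr rfl fun x _ => by
          rw [integral_mul_const]
          exact congrArg (· * _) integral_conj

theorem integral_nonneg_of_inv_mul_eq_sum_star_mul {f : H → ℂ} {φ : ι → H → ℂ}
    (hφ : ∀ x, Integrable (φ x) ν) (hf : ∀ h g, f (h⁻¹ * g) = ∑ x, star (φ x h) * φ x g) :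
    0 ≤ ∫ g, f g ∂ν := by
  rw [integral_eq_sum_star_integral_mul_integral hφ hf]
  exact Finset.sum_nonneg fun x _ => star_mul_self_nonneg _

end PositiveType

section UnitaryRepresentation

variable {G n : Type*} [Group G] [Fintype n] [DecidableEq n] (σ : G →* Matrix.unitaryGroup n ℂ)

theorem trace_unitary_map_mul_comm (a b : G) :
    (σ (a * b) : Matrix n n ℂ).trace = (σ (b * a) : Matrix n n ℂ).trace := by
  simp only [map_mul, Matrix.UnitaryGroup.mul_val]
  exact Matrix.trace_mul_comm _ _

theorem star_vec_dotProduct_vec_unitary_map (a b : G) :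
    star (σ a : Matrix n n ℂ).vec ⬝ᵥ (σ b : Matrix n n ℂ).vec
      = (σ (a⁻¹ * b) : Matrix n n ℂ).trace := by
  rw [Matrix.star_vec_dotProduct_vec, map_mul, map_inv, Matrix.UnitaryGroup.mul_val,
    Matrix.UnitaryGroup.inv_val, Matrix.star_eq_conjTranspose]

theorem star_vec_dotProduct_vec_unitary_map_mul_inv (h₁ h₂ g₁ g₂ : G) :
    star (σ (h₁ * h₂⁻¹) : Matrix n n ℂ).vec ⬝ᵥ (σ (g₁ * g₂⁻¹) : Matrix n n ℂ).vec
      = (σ (h₁⁻¹ * g₁ * (h₂⁻¹ * g₂)⁻¹) : Matrix n n ℂ).trace := by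
  rw [star_vec_dotProduct_vec_unitary_map, show (h₁ * h₂⁻¹)⁻¹ * (g₁ * g₂⁻¹)
    = h₂ * (h₁⁻¹ * g₁ * g₂⁻¹) by group, trace_unitary_map_mul_comm]
  congr 3
  group

theorem unitary_map_mul_inv_apply (a b : G) (i j : n) :
    (σ (a * b⁻¹) : Matrix n n ℂ) i j
      = ∑ c, (σ a : Matrix n n ℂ) i c * star ((σ b : Matrix n n ℂ) j c) := by
  rw [map_mul, map_inv, Matrix.UnitaryGroup.mul_val, Matrix.UnitaryGroup.inv_val, Matrix.mul_apply]
  rfl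

variable [TopologicalSpace G] [MeasurableSpace G] [OpensMeasurableSpace G]

theorem measurable_unitary_map_mul_inv_apply (hσ : Continuous fun g => (σ g : Matrix n n ℂ))
    {X : Type*} [MeasurableSpace X] {u v : X → G} (hu : Measurable u) (hv : Measurable v)
    (i j : n) : Measurable fun x => (σ (u x * (v x)⁻¹) : Matrix n n ℂ) i j := by
  have hentry : ∀ a b, Measurable fun g => (σ g : Matrix n n ℂ) a b := fun a b =>
    ((continuous_apply_apply a b).comp hσ).measurable
  simp only [unitary_map_mul_inv_apply]
  exact Finset.measurable_sum _ fun c _ =>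
    ((hentry i c).comp hu).mul (continuous_star.measurable.comp ((hentry j c).comp hv))

end UnitaryRepresentation

section SpinNetwork

variable {G V ι : Type*} [Group G] [Fintype ι] {n : ι → Type*} [∀ i, Fintype (n i)]
  [∀ i, DecidableEq (n i)] (σ : ∀ i, G →* Matrix.unitaryGroup (n i) ℂ) (s t : ι → V)

def spinNetworkCoeff (x : ∀ i, n i × n i) (g : V → G) : ℂ :=
  ∏ i, (σ i (g (s i) * (g (t i))⁻¹) : Matrix (n i) (n i) ℂ).vec (x i)

theorem sum_star_spinNetworkCoeff_mul [DecidableEq ι] (h g : V → G) :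
    ∑ x, star (spinNetworkCoeff σ s t x h) * spinNetworkCoeff σ s t x g
      = ∏ i, (σ i ((h⁻¹ * g) (s i) * ((h⁻¹ * g) (t i))⁻¹) : Matrix (n i) (n i) ℂ).trace := by
  calc _ = ∏ i, ∑ y, star ((σ i (h (s i) * (h (t i))⁻¹) : Matrix (n i) (n i) ℂ).vec y)
          * (σ i (g (s i) * (g (t i))⁻¹) : Matrix (n i) (n i) ℂ).vec y := by
        simp only [Fintype.prod_sum, spinNetworkCoeff, star_prod, Finset.prod_mul_distrib]
    _ = _ := Finset.prod_congr rfl fun i _ =>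
        star_vec_dotProduct_vec_unitary_map_mul_inv (σ i) _ _ _ _

theorem norm_spinNetworkCoeff_le_one (x : ∀ i, n i × n i) (g : V → G) :
    ‖spinNetworkCoeff σ s t x g‖ ≤ 1 := by
  rw [spinNetworkCoeff, norm_prod]
  exact Finset.prod_le_one (fun _ _ => norm_nonneg _) fun i _ =>
    entry_norm_bound_of_unitary (σ i _).2 _ _

variable [TopologicalSpace G] [MeasurableSpace G] [OpensMeasurableSpace G]

theorem measurable_spinNetworkCoeff (hσ : ∀ i, Continuous fun g => (σ i g : Matrix (n i) (n i) ℂ))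
    (x : ∀ i, n i × n i) : Measurable (spinNetworkCoeff σ s t x) :=
  Finset.measurable_prod _ fun i _ => measurable_unitary_map_mul_inv_apply (σ i) (hσ i)
    (measurable_pi_apply (s i)) (measurable_pi_apply (t i)) _ _

theorem integrable_spinNetworkCoeff (hσ : ∀ i, Continuous fun g => (σ i g : Matrix (n i) (n i) ℂ))
    (ν : Measure (V → G)) [IsFiniteMeasure ν] (x : ∀ i, n i × n i) :
    Integrable (spinNetworkCoeff σ s t x) ν :=
  .of_bound (measurable_spinNetworkCoeff σ s t hσ x).aestronglyMeasurable 1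
    (.of_forall (norm_spinNetworkCoeff_le_one σ s t x))

end SpinNetwork

theorem subgraph_spin_network_evaluation_nonneg_general
    {G : Type*} [Group G] [TopologicalSpace G] [IsTopologicalGroup G]
    [MeasurableSpace G] [BorelSpace G]
    (μ : Measure G) [Measure.IsHaarMeasure μ] [IsProbabilityMeasure μ]
    {k : ℕ}
    (E : Finset (Fin k × Fin k))
    {p : Fin k → Fin k → ℕ}
    (ρ : (i j : Fin k) → G →* Matrix.unitaryGroup (Fin (p i j)) ℂ)
    (hρ : ∀ i j, Continuous fun g : G => (ρ i j g : Matrix (Fin (p i j)) (Fin (p i j)) ℂ)) :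
    0 ≤ ∫ g : Fin k → G,
        ∏ e ∈ E,
          (ρ e.1 e.2 (g e.1 * (g e.2)⁻¹) : Matrix (Fin (p e.1 e.2)) (Fin (p e.1 e.2)) ℂ).trace
        ∂(Measure.pi fun _ : Fin k => μ) := by
  classical
  simp_rw [← Finset.prod_coe_sort E]
  exact integral_nonneg_of_inv_mul_eq_sum_star_mul
    (fun x => integrable_spinNetworkCoeff (fun e : E => ρ e.1.1 e.1.2) (fun e => e.1.1)
      (fun e => e.1.2) (fun e => hρ e.1.1 e.1.2) _ x)
    fun h g => (sum_star_spinNetworkCoeff_mul _ _ _ h g).symm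

/-- Positivity of spin network evaluations on an arbitrary subgraph `E` of the complete graph
on `k` vertices: the evaluation
`∫_{G^k} ∏_{(i,j)∈E} χ_{ρᵢⱼ}(gᵢ gⱼ⁻¹) dμ^{⊗k}(g)`
is a nonnegative real number (in the partial order of `ℂ`: imaginary part `0`,
real part `≥ 0`). -/
theorem subgraph_spin_network_evaluation_nonneg
    {G : Type*} [Group G] [TopologicalSpace G] [IsTopologicalGroup G]
    [CompactSpace G] [MeasurableSpace G] [BorelSpace G]
    (μ : Measure G) [Measure.IsHaarMeasure μ] [IsProbabilityMeasure μ]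
    {k : ℕ} (hk : 1 ≤ k)
    (E : Finset (Fin k × Fin k)) (hE : ∀ e ∈ E, e.1 < e.2)
    {p : Fin k → Fin k → ℕ}
    (ρ : (i j : Fin k) → G →* Matrix.unitaryGroup (Fin (p i j)) ℂ)
    (hρ : ∀ i j, Continuous fun g : G => (ρ i j g : Matrix (Fin (p i j)) (Fin (p i j)) ℂ)) :
    0 ≤ ∫ g : Fin k → G,
        ∏ e ∈ E,
          (ρ e.1 e.2 (g e.1 * (g e.2)⁻¹) : Matrix (Fin (p e.1 e.2)) (Fin (p e.1 e.2)) ℂ).trace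
        ∂(Measure.pi fun _ : Fin k => μ) :=
  subgraph_spin_network_evaluation_nonneg_general μ E ρ hρ
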